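/- Fix κ > 1, β with 0 < β < 1/2, and δ > 0. Then there exist η > 0 and n₀ ∈ ℕ, depending only on κ, β, δ, with the following property. Let (Ω, P) be a probability space, let (B_n)_{n≥1} be an i.i.d. sequence of {0,1}-valued random variables with P(B_n = 0) = P(B_n = 1) = 1/2, and let (Z_n)_{n≥0} be a sequence of measurable random variables with values in [0,1] such that, almost surely, Z₀ ≤ η and for every n ≥ 0: Z_{n+1} ≤ κ·Z_n² when B_{n+1} = 0, and Z_{n+1} ≤ κ·Z_n when B_{n+1} = 1. Then P( Z_n ≤ 2^{−2^{nβ}} for all n ≥ n₀ ) ≥ 1 − δ. -/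

import Mathlib

open MeasureTheory ProbabilityTheory Filter Topology Finset

/-!
Along a path, a `0`-step squares `κ Z_n` and a `1`-step multiplies it by `κ`, so
`κ Z_n ≤ κ ^ (-u_n)` where `u` doubles at a `0`-step and drops by one at a `1`-step. With `z_n`
the number of `0`-steps among the first `n`, the quantity `u_n 2^{-z_n}` only decreases, by
`2^{-z_j}` at a `1`-step, so `u_n ≥ 2^{z_n} (u_0 - ∑_j 2^{-z_j})`. By Hoeffding's inequality,
outside an event of probability at most `∑_{j ≥ J} e^{-2ε²j}` we have `z_j > θ j` for all
`j ≥ J`, where `θ = 1/2 - ε > β`; then `∑_j 2^{-z_j}` is bounded in terms of `θ` and `J` only, so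
a large `u_0` (a small `η`) gives `u_n ≥ 2^{θ(n - J)}`, which eventually beats
`2^{nβ} log 2 / log κ`.
-/

def zeroCount (b : ℕ → ℕ) (n : ℕ) : ℕ := #{i ∈ range n | b i = 0}

lemma zeroCount_succ (b : ℕ → ℕ) (n : ℕ) :
    zeroCount b (n + 1) = zeroCount b n + if b n = 0 then 1 else 0 := by
  simp only [zeroCount, range_add_one, filter_insert]
  split_ifs <;> simp [card_insert_of_notMem]

def exponentSeq (b : ℕ → ℕ) (K : ℝ) : ℕ → ℝ
  | 0 => K
  | n + 1 => if b n = 0 then 2 * exponentSeq b K n else exponentSeq b K n - 1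

lemma mul_le_rpow_neg_exponentSeq {κ : ℝ} (hκ : 0 < κ) {b : ℕ → ℕ}
    (hb : ∀ n, b n = 0 ∨ b n = 1) {x : ℕ → ℝ} (hx : ∀ n, 0 ≤ x n)
    (hstep : ∀ n, (b n = 0 → x (n + 1) ≤ κ * x n ^ 2) ∧ (b n = 1 → x (n + 1) ≤ κ * x n))
    {K : ℝ} (h0 : κ * x 0 ≤ κ ^ (-K)) (n : ℕ) : κ * x n ≤ κ ^ (-exponentSeq b K n) := by
  induction n with
  | zero => exact h0
  | succ n ih =>
    rcases hb n with hbn | hbn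
    · calc κ * x (n + 1) ≤ κ * (κ * x n ^ 2) := by gcongr; exact (hstep n).1 hbn
        _ = (κ * x n) ^ 2 := by ring
        _ ≤ (κ ^ (-exponentSeq b K n)) ^ 2 := by gcongr; exact mul_nonneg hκ.le (hx n)
        _ = κ ^ (-exponentSeq b K (n + 1)) := by
          rw [exponentSeq, if_pos hbn, ← Real.rpow_mul_natCast hκ.le]; ring_nf
    · calc κ * x (n + 1) ≤ κ * (κ * x n) := by gcongr; exact (hstep n).2 hbn
        _ ≤ κ * κ ^ (-exponentSeq b K n) := by gcongr
        _ = κ ^ (-exponentSeq b K (n + 1)) := by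
          rw [exponentSeq, if_neg (by omega), neg_sub, sub_eq_neg_add, Real.rpow_add_one hκ.ne',
            mul_comm]

lemma two_pow_zeroCount_mul_le_exponentSeq (b : ℕ → ℕ) (K : ℝ) (n : ℕ) :
    2 ^ zeroCount b n * (K - ∑ j ∈ range n, (2⁻¹ : ℝ) ^ zeroCount b j) ≤ exponentSeq b K n := by
  induction n with
  | zero => simp [zeroCount, exponentSeq]
  | succ n ih =>
    have h : (2 : ℝ) ^ zeroCount b n * 2⁻¹ ^ zeroCount b n = 1 := by
      rw [← mul_pow, mul_inv_cancel₀ two_ne_zero, one_pow]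
    rw [sum_range_succ, exponentSeq, zeroCount_succ]
    split_ifs
    · rw [pow_succ]; nlinarith
    · rw [add_zero]; nlinarith

lemma sum_range_inv_two_pow_le {z : ℕ → ℕ} {θ J : ℝ} (hθ : 0 < θ)
    (hz : ∀ j : ℕ, θ * (j - J) ≤ z j) (n : ℕ) :
    ∑ j ∈ range n, (2⁻¹ : ℝ) ^ z j ≤ 2 ^ (θ * J) / (1 - 2 ^ (-θ)) := by
  have hq₀ : 0 ≤ (2 : ℝ) ^ (-θ) := by positivity
  have hq₁ : (2 : ℝ) ^ (-θ) < 1 := Real.rpow_lt_one_of_one_lt_of_neg one_lt_two (by linarith)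
  calc ∑ j ∈ range n, (2⁻¹ : ℝ) ^ z j
      ≤ ∑ j ∈ range n, 2 ^ (θ * J) * ((2 : ℝ) ^ (-θ)) ^ j := by
        gcongr with j
        rw [inv_pow, ← Real.rpow_natCast, ← Real.rpow_neg zero_le_two, ← Real.rpow_natCast,
          ← Real.rpow_mul zero_le_two, ← Real.rpow_add two_pos]
        exact Real.rpow_le_rpow_of_exponent_le one_le_two (by linarith [hz j])
    _ = 2 ^ (θ * J) * ∑ j ∈ range n, ((2 : ℝ) ^ (-θ)) ^ j := (mul_sum ..).symm
    _ ≤ 2 ^ (θ * J) * ∑' j, ((2 : ℝ) ^ (-θ)) ^ j := by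
        gcongr
        exact (summable_geometric_of_lt_one hq₀ hq₁).sum_le_tsum _ fun j _ ↦ by positivity
    _ = 2 ^ (θ * J) / (1 - 2 ^ (-θ)) := by
        rw [tsum_geometric_of_lt_one hq₀ hq₁, div_eq_mul_inv]

lemma le_rpow_neg_two_rpow {κ : ℝ} (hκ : 1 < κ) {b : ℕ → ℕ} (hb : ∀ n, b n = 0 ∨ b n = 1)
    {x : ℕ → ℝ} (hx : ∀ n, 0 ≤ x n)
    (hstep : ∀ n, (b n = 0 → x (n + 1) ≤ κ * x n ^ 2) ∧ (b n = 1 → x (n + 1) ≤ κ * x n))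
    {θ : ℝ} (hθ : 0 < θ) {J : ℕ} (hz : ∀ j ≥ J, θ * j < zeroCount b j)
    {K : ℝ} (hK : 2 ^ (θ * J) / (1 - 2 ^ (-θ)) + 1 ≤ K) (h0 : κ * x 0 ≤ κ ^ (-K)) (n : ℕ) :
    x n ≤ κ ^ (-(2 : ℝ) ^ (θ * (n - J))) := by
  have hz' : ∀ j : ℕ, θ * (j - J) ≤ zeroCount b j := by
    intro j
    rcases le_or_gt J j with hj | hj
    · have : (J : ℝ) ≥ 0 := J.cast_nonneg
      nlinarith [hz j hj]
    · have : (j : ℝ) < J := by exact_mod_cast hj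
      nlinarith [(zeroCount b j).cast_nonneg (α := ℝ)]
  have hexp : (2 : ℝ) ^ (θ * (n - J)) ≤ exponentSeq b K n := calc
    (2 : ℝ) ^ (θ * (n - J)) ≤ 2 ^ zeroCount b n := by
      rw [← Real.rpow_natCast]; exact Real.rpow_le_rpow_of_exponent_le one_le_two (hz' n)
    _ ≤ 2 ^ zeroCount b n * (K - ∑ j ∈ range n, (2⁻¹ : ℝ) ^ zeroCount b j) := by
      have := sum_range_inv_two_pow_le hθ hz' n
      exact le_mul_of_one_le_right (by positivity) (by linarith)
    _ ≤ exponentSeq b K n := two_pow_zeroCount_mul_le_exponentSeq b K n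
  calc x n ≤ κ * x n := le_mul_of_one_le_left (hx n) hκ.le
    _ ≤ κ ^ (-exponentSeq b K n) := mul_le_rpow_neg_exponentSeq (by linarith) hb hx hstep h0 n
    _ ≤ κ ^ (-(2 : ℝ) ^ (θ * (n - J))) :=
      Real.rpow_le_rpow_of_exponent_le hκ.le (neg_le_neg hexp)

lemma eventually_rpow_neg_two_rpow_le {κ : ℝ} (hκ : 1 < κ) {β θ : ℝ} (hβθ : β < θ) (J : ℝ) :
    ∀ᶠ n : ℕ in atTop, κ ^ (-(2 : ℝ) ^ (θ * (n - J))) ≤ 2 ^ (-(2 : ℝ) ^ ((n : ℝ) * β)) := by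
  have hlog : 0 < Real.log κ := Real.log_pos hκ
  have h_tendsto : Tendsto (fun n : ℕ ↦ (2 : ℝ) ^ ((θ - β) * n - θ * J)) atTop atTop :=
    (tendsto_rpow_atTop_of_base_gt_one 2 one_lt_two).comp <|
      tendsto_atTop_add_const_right _ _ <|
        (tendsto_natCast_atTop_atTop).const_mul_atTop (by linarith)
  filter_upwards [h_tendsto.eventually_ge_atTop (Real.log 2 / Real.log κ)] with n hn
  rw [div_le_iff₀ hlog] at hn
  have hsplit : (2 : ℝ) ^ (θ * (n - J)) = 2 ^ ((n : ℝ) * β) * 2 ^ ((θ - β) * n - θ * J) := by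
    rw [← Real.rpow_add two_pos]; ring_nf
  rw [hsplit, Real.rpow_def_of_pos (by linarith : 0 < κ), Real.rpow_def_of_pos two_pos (-_),
    Real.exp_le_exp]
  have : (0 : ℝ) ≤ 2 ^ ((n : ℝ) * β) := by positivity
  nlinarith [mul_le_mul_of_nonneg_left hn this]

section Probability

variable {Ω : Type*} [MeasurableSpace Ω] {μ : Measure Ω} [IsProbabilityMeasure μ]

lemma measureReal_sum_range_le_le_exp {X : ℕ → Ω → ℝ} (h_indep : iIndepFun X μ)
    (h_meas : ∀ i, AEMeasurable (X i) μ) (h_mem : ∀ i, ∀ᵐ ω ∂μ, X i ω ∈ Set.Icc 0 1)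
    {m : ℝ} (h_mean : ∀ i, μ[X i] = m) {ε : ℝ} (hε : 0 ≤ ε) (n : ℕ) :
    μ.real {ω | ∑ i ∈ range n, X i ω ≤ (m - ε) * n} ≤ Real.exp (-2 * ε ^ 2 * n) := by
  have h_subG :
      ∀ i < n, HasSubgaussianMGF (fun ω ↦ m - X i ω) ((‖m - (m - 1)‖₊ / 2) ^ 2) μ := by
    refine fun i _ ↦
      hasSubgaussianMGF_of_mem_Icc_of_integral_eq_zero ((h_meas i).const_sub m) ?_ ?_
    · filter_upwards [h_mem i] with ω ⟨h0, h1⟩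
      constructor <;> linarith
    · rw [integral_sub (integrable_const m) (Integrable.of_mem_Icc 0 1 (h_meas i) (h_mem i)),
        h_mean i, integral_const, probReal_univ, one_smul, sub_self]
  have h_indep' : iIndepFun (fun i ω ↦ m - X i ω) μ :=
    h_indep.comp (fun _ x ↦ m - x) (fun _ ↦ by fun_prop)
  convert HasSubgaussianMGF.measure_sum_range_ge_le_of_iIndepFun h_indep' h_subG
    (mul_nonneg hε n.cast_nonneg) using 2
  · ext ω
    simp only [Set.mem_ofPred_eq, sum_sub_distrib, sum_const, card_range, nsmul_eq_mul]
    constructor <;> intro h <;> linarith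
  · rcases eq_or_ne n 0 with rfl | hn
    · simp
    · norm_num
      field_simp
      ring

lemma one_sub_le_measureReal_of_ae_notMem_imp {s t : Set Ω} {δ : ℝ} (hδ : 0 ≤ δ)
    (hs : μ s ≤ ENNReal.ofReal δ) (hst : ∀ᵐ ω ∂μ, ω ∉ s → ω ∈ t) : 1 - δ ≤ μ.real t := by
  have h : 1 ≤ ENNReal.ofReal δ + μ t := calc
    1 = μ Set.univ := measure_univ.symm
    _ ≤ μ s + μ sᶜ := measure_univ_le_add_compl s
    _ ≤ ENNReal.ofReal δ + μ t := add_le_add hs (measure_mono_ae hst)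
  have := ENNReal.toReal_mono (by finiteness) h
  rw [ENNReal.toReal_add (by finiteness) (by finiteness), ENNReal.toReal_ofReal hδ] at this
  simp only [ENNReal.toReal_one] at this
  rw [measureReal_def]
  linarith

lemma measureReal_zeroCount_le_le_exp {B : ℕ → Ω → ℕ} (h_meas : ∀ n, Measurable (B n))
    (h_indep : iIndepFun B μ) (h_zero : ∀ n, μ {ω | B n ω = 0} = 1 / 2) {ε : ℝ} (hε : 0 ≤ ε)
    (n : ℕ) :
    μ.real {ω | (zeroCount (B · ω) n : ℝ) ≤ (1 / 2 - ε) * n} ≤ Real.exp (-2 * ε ^ 2 * n) := by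
  set X : ℕ → Ω → ℝ := fun i ↦ ({0} : Set ℕ).indicator 1 ∘ B i
  have hX_meas : ∀ i, MeasurableSet (B i ⁻¹' {0}) := fun i ↦ h_meas i (measurableSet_singleton 0)
  have h_count : ∀ ω, (zeroCount (B · ω) n : ℝ) = ∑ i ∈ range n, X i ω := fun ω ↦ by
    simp only [zeroCount, natCast_card_filter, X, Function.comp_apply, Set.indicator_apply,
      Set.mem_singleton_iff, Pi.one_apply]
  simp only [h_count]
  refine measureReal_sum_range_le_le_exp (h_indep.comp (fun _ ↦ ({0} : Set ℕ).indicator 1)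
    (fun _ ↦ measurable_from_top)) (fun i ↦ (measurable_one.indicator (hX_meas i)).aemeasurable)
    (fun i ↦ ae_of_all _ fun ω ↦ ?_) (fun i ↦ ?_) hε n
  · by_cases h : B i ω = 0 <;> simp [h]
  · change ∫ ω, (B i ⁻¹' {0}).indicator 1 ω ∂μ = 1 / 2
    rw [integral_indicator_one (hX_meas i), measureReal_def]
    simp [Set.preimage, h_zero i]

lemma measure_exists_zeroCount_le_le {B : ℕ → Ω → ℕ} (h_meas : ∀ n, Measurable (B n))
    (h_indep : iIndepFun B μ) (h_zero : ∀ n, μ {ω | B n ω = 0} = 1 / 2) {ε : ℝ} (hε : 0 < ε)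
    (J : ℕ) :
    μ {ω | ∃ j ≥ J, (zeroCount (B · ω) j : ℝ) ≤ (1 / 2 - ε) * j}
      ≤ ENNReal.ofReal (∑' k, Real.exp (-2 * ε ^ 2) ^ (k + J)) := by
  have hr : Real.exp (-2 * ε ^ 2) < 1 := Real.exp_lt_one_iff.2 (by nlinarith)
  calc μ {ω | ∃ j ≥ J, (zeroCount (B · ω) j : ℝ) ≤ (1 / 2 - ε) * j}
      ≤ μ (⋃ k, {ω | (zeroCount (B · ω) (k + J) : ℝ) ≤ (1 / 2 - ε) * ↑(k + J)}) := by
        refine measure_mono fun ω ⟨j, hj, hω⟩ ↦ Set.mem_iUnion.2 ⟨j - J, ?_⟩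
        rwa [Nat.sub_add_cancel hj]
    _ ≤ ∑' k, μ {ω | (zeroCount (B · ω) (k + J) : ℝ) ≤ (1 / 2 - ε) * ↑(k + J)} :=
        measure_iUnion_le _
    _ ≤ ∑' k, ENNReal.ofReal (Real.exp (-2 * ε ^ 2) ^ (k + J)) := by
        refine ENNReal.tsum_le_tsum fun k ↦ ?_
        rw [← ofReal_measureReal, ← Real.exp_nat_mul]
        refine ENNReal.ofReal_le_ofReal <|
          (measureReal_zeroCount_le_le_exp h_meas h_indep h_zero hε.le _).trans_eq ?_
        ring_nf
    _ = ENNReal.ofReal (∑' k, Real.exp (-2 * ε ^ 2) ^ (k + J)) :=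
        (ENNReal.ofReal_tsum_of_nonneg (fun k ↦ by positivity)
          ((summable_nat_add_iff J).2 (summable_geometric_of_lt_one (by positivity) hr))).symm

end Probability

/-- (Universal fast polarization.) For `κ > 1`, `0 < β < 1/2`, `δ > 0`,
there exist `η > 0` and `n₀`, depending only on `κ, β, δ`, such that for every probability
space, every i.i.d. fair `{0,1}`-valued sequence `(B_n)` (here `B n` plays the role of
`B_{n+1}`) and every `[0,1]`-valued process `(Z_n)` satisfying almost surely `Z₀ ≤ η` and
`Z_{n+1} ≤ κ Z_n²` when `B_{n+1} = 0`, `Z_{n+1} ≤ κ Z_n` when `B_{n+1} = 1`, one has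
`P(Z_n ≤ 2^{−2^{nβ}} for all n ≥ n₀) ≥ 1 − δ`. -/
theorem stmt_14 (κ : ℝ) (hκ : 1 < κ) (β : ℝ) (hβ0 : 0 < β) (hβ : β < 1 / 2)
    (δ : ℝ) (hδ : 0 < δ) :
    ∃ η > (0 : ℝ), ∃ n₀ : ℕ,
      ∀ (Ω : Type) (_ : MeasurableSpace Ω) (P : Measure Ω), IsProbabilityMeasure P →
      ∀ (B : ℕ → Ω → ℕ) (Z : ℕ → Ω → ℝ),
        (∀ n, Measurable (B n)) →
        (∀ n ω, B n ω = 0 ∨ B n ω = 1) →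
        iIndepFun B P →
        (∀ n, P {ω | B n ω = 0} = 1 / 2) →
        (∀ n, P {ω | B n ω = 1} = 1 / 2) →
        (∀ n, Measurable (Z n)) →
        (∀ n ω, Z n ω ∈ Set.Icc (0 : ℝ) 1) →
        (∀ᵐ ω ∂P, Z 0 ω ≤ η ∧
          ∀ n, (B n ω = 0 → Z (n + 1) ω ≤ κ * Z n ω ^ 2) ∧
               (B n ω = 1 → Z (n + 1) ω ≤ κ * Z n ω)) →
        1 - δ ≤
          (P {ω | ∀ n, n₀ ≤ n → Z n ω ≤ (2 : ℝ) ^ (-(2 : ℝ) ^ ((n : ℝ) * β))}).toReal := by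
  set ε : ℝ := (1 / 2 - β) / 2 with hε_def
  have hε : 0 < ε := by linarith
  have hθ : 0 < 1 / 2 - ε := by linarith
  have hβθ : β < 1 / 2 - ε := by linarith
  obtain ⟨J, hJ⟩ : ∃ J : ℕ, ∑' k, Real.exp (-2 * ε ^ 2) ^ (k + J) < δ :=
    ((tendsto_sum_nat_add _).eventually (gt_mem_nhds hδ)).exists
  set K : ℝ := 2 ^ ((1 / 2 - ε) * J) / (1 - 2 ^ (-(1 / 2 - ε))) + 1
  obtain ⟨n₀, hn₀⟩ := (eventually_rpow_neg_two_rpow_le hκ hβθ J).exists_forall_of_atTop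
  have hκ₀ : 0 < κ := by linarith
  refine ⟨κ ^ (-K) / κ, by positivity, n₀,
    fun Ω _ P _ B Z hB_meas hB hB_indep hB_zero _ _ hZ hae ↦ ?_⟩
  have h_bad := (measure_exists_zeroCount_le_le hB_meas hB_indep hB_zero hε J).trans
    (ENNReal.ofReal_le_ofReal hJ.le)
  refine one_sub_le_measureReal_of_ae_notMem_imp hδ.le h_bad ?_
  filter_upwards [hae] with ω ⟨h0, hstep⟩ h_good n hn
  push Not at h_good
  rw [le_div_iff₀' hκ₀] at h0
  exact (le_rpow_neg_two_rpow hκ (hB · ω) (fun n ↦ (hZ n ω).1) hstep hθ h_good le_rfl h0 n).trans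
    (hn₀ n hn)
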